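/- arXiv:1704.03237 — 3 statements merged into one kernel-verified Lean document; each statement's English description precedes it below -/
import Mathlib

section
/- Let A be a unital, not necessarily commutative ring, let m ∈ A, and let e₁,…,e_s ∈ A be a complete set of orthogonal idempotents. If the commutator [m, e₁] = m·e₁ − e₁·m commutes with e_i for every i = 1,…,s, then [m, e₁] = 0. -/
/-!
Write `c = m e - e m` for an idempotent `e`. Applying the inner derivation `[m, ·]` to `e = e²`
gives `c = c e + e c`, while `e c e = e m e - e m e = 0`. If `c` commutes with `e`, then
`c e = c e e = e c e = 0` and likewise `e c = 0`, so `c = 0`.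
-/

namespace IsIdempotentElem

variable {A : Type*} [Ring A] {e : A}

theorem commutator_eq_commutator_mul_add_mul_commutator (he : IsIdempotentElem e) (m : A) :
    m * e - e * m = (m * e - e * m) * e + e * (m * e - e * m) := by
  have h : (m * e - e * m) * e + e * (m * e - e * m) = m * (e * e) - (e * e) * m := by
    noncomm_ring
  rw [h, he.eq]

theorem mul_commutator_mul_self_eq_zero (he : IsIdempotentElem e) (m : A) :
    e * (m * e - e * m) * e = 0 := by
  have h : e * (m * e - e * m) * e = e * m * (e * e) - (e * e) * (m * e) := by
    noncomm_ring
  rw [h, he.eq]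
  noncomm_ring

theorem commutator_eq_zero_of_commute (he : IsIdempotentElem e) (m : A)
    (hcomm : Commute (m * e - e * m) e) : m * e - e * m = 0 := by
  set c := m * e - e * m
  have hce : c * e = 0 :=
    calc c * e = c * e * e := by rw [mul_assoc, he.eq]
      _ = e * c * e := by rw [hcomm.eq]
      _ = 0 := he.mul_commutator_mul_self_eq_zero m
  have hec : e * c = 0 := by rw [← hcomm.eq, hce]
  calc c = c * e + e * c := he.commutator_eq_commutator_mul_add_mul_commutator m
    _ = 0 := by rw [hce, hec, add_zero]

end IsIdempotentElem

theorem commutator_of_idempotent_eq_zero_general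
    {A : Type*} [Ring A] (m : A)
    (s : ℕ) (e : Fin (s + 1) → A)
    (hidem : ∀ i, e i * e i = e i)
    (hcomm : ∀ i, Commute (m * e 0 - e 0 * m) (e i)) :
    m * e 0 - e 0 * m = 0 :=
  IsIdempotentElem.commutator_eq_zero_of_commute (hidem 0) m (hcomm 0)

/-- Lemma 1.7: if `m ∈ A` and `e 0, …, e s` is a complete set of orthogonal idempotents
such that the commutator `[m, e 0]` commutes with every `e i`, then `[m, e 0] = 0`. -/
theorem commutator_of_idempotent_eq_zero
    {A : Type*} [Ring A] (m : A)
    (s : ℕ) (e : Fin (s + 1) → A)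
    (hidem : ∀ i, e i * e i = e i)
    (horth : ∀ i j, i ≠ j → e i * e j = 0)
    (hcomplete : ∑ i, e i = 1)
    (hcomm : ∀ i, Commute (m * e 0 - e 0 * m) (e i)) :
    m * e 0 - e 0 * m = 0 :=
  commutator_of_idempotent_eq_zero_general m s e hidem hcomm
end

section
/- Let A be a unital ring, let S ⊆ A be a subset whose elements pairwise commute, and let d₁, d₂ : A → A be derivations such that d₁(Comm(S)) ⊆ Comm(S) and d₂(Comm(S)) ⊆ Comm(S). Then [d₁(a), d₂(b)] = 0 for all a, b ∈ S. In particular (taking d₂ the identity-role case): if d₁(a) ∈ Comm(S) for all a ∈ S, then [d₁(a), b] = 0 for all a, b ∈ S. -/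
/-!
For `a, b ∈ S`, the element `x = d₁ a` lies in `Comm(S)`, hence so does `d₂ x`; so both `x` and
`d₂ x` commute with `b`. Applying `d₂` to `x b = b x` and cancelling `d₂ x · b = b · d₂ x` leaves
`x · d₂ b = d₂ b · x`.
-/

theorem Commute.apply_right_of_leibniz {A : Type*} [NonUnitalNonAssocRing A] {d : A → A}
    (hd : ∀ a b : A, d (a * b) = d a * b + a * d b) {x b : A}
    (hxb : Commute x b) (hdxb : Commute (d x) b) : Commute x (d b) := by
  have h := congrArg d hxb.eq
  rw [hd, hd, hdxb.eq, add_comm (d b * x)] at h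
  exact add_left_cancel h

theorem derivations_commute_on_commuting_set_general
    {A : Type*} [Ring A] (S : Set A)
    (hS : ∀ a ∈ S, ∀ b ∈ S, a * b = b * a)
    (d₁ d₂ : A → A)
    (hd₂_mul : ∀ a b : A, d₂ (a * b) = d₂ a * b + a * d₂ b)
    (hd₁ : ∀ c ∈ Set.centralizer S, d₁ c ∈ Set.centralizer S)
    (hd₂ : ∀ c ∈ Set.centralizer S, d₂ c ∈ Set.centralizer S) :
    (∀ a ∈ S, ∀ b ∈ S, d₁ a * d₂ b - d₂ b * d₁ a = 0) ∧
    ((∀ a ∈ S, d₁ a ∈ Set.centralizer S) →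
      ∀ a ∈ S, ∀ b ∈ S, d₁ a * b - b * d₁ a = 0) := by
  have hSC : S ⊆ Set.centralizer S := fun a ha b hb => hS b hb a ha
  have hd₁S : ∀ a ∈ S, d₁ a ∈ Set.centralizer S := fun a ha => hd₁ a (hSC ha)
  refine ⟨fun a ha b hb => ?_, fun _ a ha b hb => sub_eq_zero.mpr (hd₁S a ha b hb).symm⟩
  have hx : Commute (d₁ a) b := (hd₁S a ha b hb).symm
  have hd₂x : Commute (d₂ (d₁ a)) b := (hd₂ _ (hd₁S a ha) b hb).symm
  exact sub_eq_zero.mpr (hx.apply_right_of_leibniz hd₂_mul hd₂x).eq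

/-- Lemma 2.1.4 (commutativity under admissible conditions), algebraic core:
if `S ⊆ A` is pairwise commuting and `d₁, d₂` are derivations mapping the commutant
`Comm(S)` into itself, then `[d₁ a, d₂ b] = 0` for all `a, b ∈ S`; in particular,
if `d₁` maps `S` into `Comm(S)`, then `[d₁ a, b] = 0` for all `a, b ∈ S`. -/
theorem derivations_commute_on_commuting_set
    {A : Type*} [Ring A] (S : Set A)
    (hS : ∀ a ∈ S, ∀ b ∈ S, a * b = b * a)
    (d₁ d₂ : A → A)
    (hd₁_add : ∀ a b : A, d₁ (a + b) = d₁ a + d₁ b)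
    (hd₁_mul : ∀ a b : A, d₁ (a * b) = d₁ a * b + a * d₁ b)
    (hd₂_add : ∀ a b : A, d₂ (a + b) = d₂ a + d₂ b)
    (hd₂_mul : ∀ a b : A, d₂ (a * b) = d₂ a * b + a * d₂ b)
    (hd₁ : ∀ c ∈ Set.centralizer S, d₁ c ∈ Set.centralizer S)
    (hd₂ : ∀ c ∈ Set.centralizer S, d₂ c ∈ Set.centralizer S) :
    (∀ a ∈ S, ∀ b ∈ S, d₁ a * d₂ b - d₂ b * d₁ a = 0) ∧
    ((∀ a ∈ S, d₁ a ∈ Set.centralizer S) →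
      ∀ a ∈ S, ∀ b ∈ S, d₁ a * b - b * d₁ a = 0) :=
  derivations_commute_on_commuting_set_general S hS d₁ d₂ hd₂_mul hd₁ hd₂
end

section
/- Let A be a unital ring, let S ⊆ A be a subset whose elements pairwise commute, and let m ∈ A. Then: (i) if [m,s] ∈ S for every s ∈ S, then [m,c] ∈ Comm(S) for every c ∈ Comm(S); and (ii) if [m,c] ∈ Comm(S) for every c ∈ Comm(S), then [m,s] ∈ Comm(S) for every s ∈ S. -/
/-! The first implication is the Jacobi identity
`⁅s, ⁅m, c⁆⁆ = ⁅⁅s, m⁆, c⁆ + ⁅m, ⁅s, c⁆⁆`: for `s ∈ S` and `c ∈ Comm(S)` both terms on the right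
vanish, the first because `⁅m, s⁆ ∈ S` commutes with `c`. The second implication holds because a
pairwise-commuting set lies in its own commutant. -/

namespace Set

attribute [local instance] LieRing.ofAssociativeRing

variable {A : Type*} [Ring A] {S : Set A}

theorem mem_centralizer_iff_lie_eq_zero {x : A} : x ∈ S.centralizer ↔ ∀ s ∈ S, ⁅s, x⁆ = 0 := by
  simp only [mem_centralizer_iff, Ring.lie_def, sub_eq_zero]

theorem lie_mem_centralizer_of_forall_lie_mem {m : A} (h : ∀ s ∈ S, ⁅m, s⁆ ∈ S) {c : A}
    (hc : c ∈ S.centralizer) : ⁅m, c⁆ ∈ S.centralizer := by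
  rw [mem_centralizer_iff_lie_eq_zero] at hc ⊢
  intro s hs
  have hsmc : ⁅⁅s, m⁆, c⁆ = 0 := by rw [← lie_skew s m, neg_lie, hc _ (h s hs), neg_zero]
  rw [leibniz_lie, hsmc, hc s hs, lie_zero, zero_add]

end Set

/-- Lemma 3.1.7 (hierarchy of admissible conditions on inner derivations):
for a pairwise-commuting subset `S` of a unital ring `A` and `m ∈ A`,
(i) if `[m, s] ∈ S` for every `s ∈ S`, then `[m, c] ∈ Comm(S)` for every `c ∈ Comm(S)`;
(ii) if `[m, c] ∈ Comm(S)` for every `c ∈ Comm(S)`, then `[m, s] ∈ Comm(S)` for every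
`s ∈ S`. -/
theorem inner_derivation_admissible_hierarchy
    {A : Type*} [Ring A] (S : Set A)
    (hS : ∀ a ∈ S, ∀ b ∈ S, a * b = b * a) (m : A) :
    ((∀ x ∈ S, m * x - x * m ∈ S) →
      ∀ c ∈ Set.centralizer S, m * c - c * m ∈ Set.centralizer S) ∧
    ((∀ c ∈ Set.centralizer S, m * c - c * m ∈ Set.centralizer S) →
      ∀ x ∈ S, m * x - x * m ∈ Set.centralizer S) := by
  simp only [← Ring.lie_def]
  have hS_comm : S ⊆ S.centralizer := fun x hx s hs => hS s hs x hx
  exact ⟨fun h _ => Set.lie_mem_centralizer_of_forall_lie_mem h,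
    fun h x hx => h x (hS_comm hx)⟩
end
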